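/- arXiv:2503.04566 — 5 statements merged into one kernel-verified Lean document; each statement's English description precedes it below -/
import Mathlib

section
/- Let H be a Hermitian operator on a finite-dimensional complex inner product space that has at least two distinct eigenvalues. Let E0 be its smallest eigenvalue, E1 the second smallest distinct eigenvalue, and D0 the dimension of the eigenspace for E0. If |φ_1⟩, ..., |φ_t⟩ are orthonormal vectors satisfying ⟨φ_i| H |φ_i⟩ < E0 + (E1 − E0)/(D0 + 1) for every i = 1, ..., t, then t ≤ D0. -/
/-!
Expand each `φ i` in an orthonormal eigenbasis `b` of `H`, with weights `p i j = ‖⟪b j, φ i⟫‖²`.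
Each row of weights sums to `1` (Parseval) and each column to at most `1` (Bessel). Since every
eigenvalue off the ground level is at least `E1`, the energy bound forces each `φ i` to put weight
more than `D0 / (D0 + 1)` on the ground eigenvectors, of which there are at most `D0`. Summing
over `i`, `t * D0 / (D0 + 1) < D0`, i.e. `t ≤ D0`.
-/

open Finset Module
open scoped InnerProductSpace

section Weights

variable {ι : Type*} [Fintype ι] [DecidableEq ι]

theorem sum_compl_lt_of_sum_mul_lt {p ev : ι → ℝ} {S : Finset ι} {E₀ E₁ c : ℝ}
    (hp : ∀ j, 0 ≤ p j) (hp_sum : ∑ j, p j = 1)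
    (hS : ∀ j ∈ S, ev j = E₀) (hSc : ∀ j ∉ S, E₁ ≤ ev j) (hgap : E₀ < E₁)
    (henergy : ∑ j, ev j * p j < E₀ + (E₁ - E₀) / c) :
    ∑ j ∈ Sᶜ, p j < 1 / c := by
  have hlower : E₀ + (E₁ - E₀) * ∑ j ∈ Sᶜ, p j ≤ ∑ j, ev j * p j := calc
    E₀ + (E₁ - E₀) * ∑ j ∈ Sᶜ, p j
        = E₀ * (∑ j ∈ S, p j + ∑ j ∈ Sᶜ, p j) + (E₁ - E₀) * ∑ j ∈ Sᶜ, p j := by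
          rw [sum_add_sum_compl, hp_sum, mul_one]
    _ = ∑ j ∈ S, E₀ * p j + ∑ j ∈ Sᶜ, E₁ * p j := by rw [← mul_sum, ← mul_sum]; ring
    _ ≤ ∑ j ∈ S, ev j * p j + ∑ j ∈ Sᶜ, ev j * p j := by
          refine add_le_add (sum_congr rfl fun j hj => by rw [hS j hj]).le
            (sum_le_sum fun j hj => ?_)
          exact mul_le_mul_of_nonneg_right (hSc j (mem_compl.1 hj)) (hp j)
    _ = ∑ j, ev j * p j := sum_add_sum_compl S _
  rw [div_eq_mul_one_div] at henergy
  exact lt_of_mul_lt_mul_left (by linarith) (sub_nonneg.2 hgap.le)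

theorem card_le_of_sum_compl_lt {κ : Type*} [Fintype κ] {p : κ → ι → ℝ} {S : Finset ι} {D : ℕ}
    (hrow : ∀ i, ∑ j, p i j = 1) (hcol : ∀ j, ∑ i, p i j ≤ 1) (hS : #S ≤ D)
    (hcompl : ∀ i, ∑ j ∈ Sᶜ, p i j < 1 / (D + 1)) :
    Fintype.card κ ≤ D := by
  rcases isEmpty_or_nonempty κ with _ | _
  · simp
  have hlower : Fintype.card κ * (1 - 1 / (D + 1 : ℝ)) < ∑ i, ∑ j ∈ S, p i j := by
    rw [← nsmul_eq_mul, ← card_univ, ← sum_const]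
    refine sum_lt_sum_of_nonempty univ_nonempty fun i _ => ?_
    linarith [sum_add_sum_compl S (p i), hrow i, hcompl i]
  have hupper : ∑ i, ∑ j ∈ S, p i j ≤ D := calc
    ∑ i, ∑ j ∈ S, p i j = ∑ j ∈ S, ∑ i, p i j := sum_comm
    _ ≤ ∑ j ∈ S, (1 : ℝ) := sum_le_sum fun j _ => hcol j
    _ ≤ D := by simpa using (Nat.cast_le (α := ℝ)).2 hS
  have hD : (0 : ℝ) < D + 1 := by positivity
  have : (D : ℝ) * Fintype.card κ < D * (D + 1) := by
    have := hlower.trans_le hupper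
    rw [one_sub_div hD.ne', add_sub_cancel_right, ← mul_div_assoc, div_lt_iff₀ hD] at this
    linarith
  have : (Fintype.card κ : ℝ) < D + 1 := lt_of_mul_lt_mul_left this (Nat.cast_nonneg D)
  exact Nat.lt_succ_iff.1 (by exact_mod_cast this)

end Weights

section Eigenbasis

variable {𝕜 E ι : Type*} [RCLike 𝕜] [NormedAddCommGroup E] [InnerProductSpace 𝕜 E] [Fintype ι]
  {T : E →ₗ[𝕜] E} (b : OrthonormalBasis ι 𝕜 E) {ev : ι → ℝ}

theorem OrthonormalBasis.re_inner_map_self_eq_sum (hT : T.IsSymmetric)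
    (hb : ∀ j, T (b j) = (ev j : 𝕜) • b j) (x : E) :
    RCLike.re ⟪x, T x⟫_𝕜 = ∑ j, ev j * ‖⟪b j, x⟫_𝕜‖ ^ 2 := by
  rw [← b.sum_inner_mul_inner x (T x), map_sum]
  refine sum_congr rfl fun j _ => ?_
  rw [← hT, hb j, inner_smul_left, RCLike.conj_ofReal, mul_left_comm, ← inner_conj_symm x (b j),
    RCLike.conj_mul]
  norm_cast

theorem OrthonormalBasis.card_filter_le_finrank_eigenspace [FiniteDimensional 𝕜 E]
    (hb : ∀ j, T (b j) = (ev j : 𝕜) • b j) (μ : ℝ) :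
    #{j | ev j = μ} ≤ finrank 𝕜 (Module.End.eigenspace T μ) := by
  set S : Finset ι := {j | ev j = μ}
  have hli : LinearIndependent 𝕜 fun j : S => b j :=
    b.orthonormal.linearIndependent.comp _ Subtype.val_injective
  have hspan : Submodule.span 𝕜 (Set.range fun j : S => b j) ≤ Module.End.eigenspace T μ := by
    rw [Submodule.span_le]
    rintro _ ⟨⟨j, hj⟩, rfl⟩
    rw [SetLike.mem_coe, Module.End.mem_eigenspace_iff, hb j, (mem_filter.1 hj).2]
  simpa [finrank_span_eq_card hli] using Submodule.finrank_mono hspan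

end Eigenbasis

theorem Matrix.IsHermitian.toEuclideanLin_eigenvectorBasis {n : Type*} [Fintype n] [DecidableEq n]
    {𝕜 : Type*} [RCLike 𝕜] {A : Matrix n n 𝕜} (hA : A.IsHermitian) (j : n) :
    Matrix.toEuclideanLin A (hA.eigenvectorBasis j) =
      (hA.eigenvalues j : 𝕜) • hA.eigenvectorBasis j := by
  ext k
  have := congrFun (hA.mulVec_eigenvectorBasis j) k
  simp only [Matrix.toLpLin_apply, PiLp.toLp_apply, PiLp.smul_apply, Pi.smul_apply] at this ⊢
  rw [this, RCLike.real_smul_eq_coe_smul (K := 𝕜)]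

/-- Let H be a Hermitian operator on a finite-dimensional complex inner
product space with at least two distinct eigenvalues, E0 its smallest eigenvalue,
E1 the second smallest distinct eigenvalue, and D0 the dimension of the eigenspace
for E0.  If φ_1, ..., φ_t are orthonormal vectors with ⟨φ_i|H|φ_i⟩ < E0 + (E1-E0)/(D0+1)
for all i, then t ≤ D0. -/
theorem small_energy_ground_dim {d : ℕ} (H : Matrix (Fin d) (Fin d) ℂ)
    (hH : H.IsHermitian) (E0 E1 : ℝ)
    (hE0 : IsLeast (Set.range hH.eigenvalues) E0)
    (hE1 : IsLeast {x | x ∈ Set.range hH.eigenvalues ∧ x ≠ E0} E1)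
    (D0 : ℕ)
    (hD0 : D0 = Module.finrank ℂ
      (Module.End.eigenspace (Matrix.toEuclideanLin H) ((E0 : ℂ))))
    (t : ℕ) (φ : Fin t → EuclideanSpace ℂ (Fin d))
    (hortho : Orthonormal ℂ φ)
    (henergy : ∀ i : Fin t,
      (inner ℂ (φ i) (Matrix.toEuclideanLin H (φ i)) : ℂ).re
        < E0 + (E1 - E0) / (D0 + 1)) :
    t ≤ D0 := by
  set b := hH.eigenvectorBasis
  have hb := hH.toEuclideanLin_eigenvectorBasis
  have hT : (Matrix.toEuclideanLin H).IsSymmetric := Matrix.isSymmetric_toEuclideanLin_iff.mpr hH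
  have hgap : E0 < E1 := (hE0.2 hE1.1.1).lt_of_ne hE1.1.2.symm
  rw [← Fintype.card_fin t]
  refine card_le_of_sum_compl_lt (p := fun i j => ‖⟪b j, φ i⟫_ℂ‖ ^ 2)
    (S := {j | hH.eigenvalues j = E0}) (fun i => ?_) (fun j => ?_)
    (hD0 ▸ b.card_filter_le_finrank_eigenspace hb E0) (fun i => ?_)
  · rw [b.sum_sq_norm_inner_right, hortho.1 i, one_pow]
  · simpa only [norm_inner_symm, b.orthonormal.1 j, one_pow] using
      hortho.sum_inner_products_le (s := univ) (b j)
  · refine sum_compl_lt_of_sum_mul_lt (fun j => by positivity)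
      (by rw [b.sum_sq_norm_inner_right, hortho.1 i, one_pow])
      (fun j hj => (mem_filter.1 hj).2)
      (fun j hj => hE1.2 ⟨⟨j, rfl⟩, fun h => hj (mem_filter.2 ⟨mem_univ j, h⟩)⟩) hgap ?_
    rw [← b.re_inner_map_self_eq_sum hT hb]
    exact henergy i
end

section
/- Let k ≥ 1 and let M be a unitary 2^k × 2^k complex matrix. Let G_k = {X_1, ..., X_k, Z_1, ..., Z_k}, where X_i (resp. Z_i) is the n-fold Kronecker product acting as the Pauli matrix X (resp. Z) on the i-th tensor factor and as the 2×2 identity on all others. Suppose ε ≥ 0 satisfies ε ≤ 2^{k+1}/k, and for every P ∈ G_k, min(‖MP − PM‖_F², ‖MP + PM‖_F²) ≤ ε. Then there exist a real number θ and a Pauli string Q' ∈ P_k^+ such that ‖M − e^{iθ}Q'‖_F² ≤ (k/2)·ε + 2^{−k−2}·k²·ε². -/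
open Matrix

/-- The single-qubit Pauli matrices I, X, Y, Z. -/
noncomputable def pauli : Fin 4 → Matrix (Fin 2) (Fin 2) ℂ
  | 0 => 1
  | 1 => !![0, 1; 1, 0]
  | 2 => !![0, -Complex.I; Complex.I, 0]
  | 3 => !![1, 0; 0, -1]

/-- The k-qubit Pauli string (with phase +1) with single-qubit factor `pauli (s i)`
on the i-th tensor factor. -/
noncomputable def pauliString {k : ℕ} (s : Fin k → Fin 4) :
    Matrix (Fin k → Fin 2) (Fin k → Fin 2) ℂ :=
  fun x y => ∏ i, pauli (s i) (x i) (y i)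

/-- The Pauli string acting as X on the i-th qubit and as identity elsewhere. -/
noncomputable def XAt {k : ℕ} (i : Fin k) : Matrix (Fin k → Fin 2) (Fin k → Fin 2) ℂ :=
  pauliString (fun j => if j = i then 1 else 0)

/-- The Pauli string acting as Z on the i-th qubit and as identity elsewhere. -/
noncomputable def ZAt {k : ℕ} (i : Fin k) : Matrix (Fin k → Fin 2) (Fin k → Fin 2) ℂ :=
  pauliString (fun j => if j = i then 3 else 0)

/-- The squared Frobenius norm of a complex matrix. -/
noncomputable def frobSq {m : Type*} [Fintype m] (M : Matrix m m ℂ) : ℝ :=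
  ∑ i, ∑ j, ‖M i j‖ ^ 2

/-! Expand `M` in the Pauli basis, `a_t = Tr (P_t M)`; Parseval gives `∑ |a_t|² = 2^k ‖M‖² = 4^k`.
For a generator `G`, `‖MG ∓ GM‖ = ‖GMG ∓ M‖` because `G` is a unitary involution, and conjugation
by `G` multiplies `a_t` by the sign with which `G` and `P_t` commute. So if `M` nearly commutes
(anticommutes) with `G`, the strings that anticommute (commute) with `G` carry weight at most
`2^k ε / 4`. The commutation signs with `X_i` and `Z_i` determine the `i`-th letter of a string,
so every string but one, `s`, is charged by one of the `2k` generators: the weight `Δ` off `s` is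
at most `k 2^k ε / 2`. Finally `‖M - e^{iθ} P_s‖² = 2^{k+1} - 2|a_s|` for `θ = arg a_s`, and
`|a_s|² = 4^k - Δ`. -/

namespace Matrix

variable {ι n R : Type*} [Fintype ι]

def piKronecker [CommMonoid R] (A : ι → Matrix n n R) : Matrix (ι → n) (ι → n) R :=
  fun x y => ∏ i, A i (x i) (y i)

theorem piKronecker_mul [DecidableEq ι] [Fintype n] [CommSemiring R] (A B : ι → Matrix n n R) :
    piKronecker A * piKronecker B = piKronecker (fun i => A i * B i) := by
  ext x y
  simp only [piKronecker, mul_apply, Fintype.prod_sum, ← Finset.prod_mul_distrib]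

theorem piKronecker_one [DecidableEq n] [CommMonoidWithZero R] :
    piKronecker (fun _ : ι => (1 : Matrix n n R)) = 1 := by
  ext x y
  simp only [piKronecker, one_apply, Fintype.prod_boole, funext_iff]

theorem piKronecker_smul [CommMonoid R] (c : ι → R) (A : ι → Matrix n n R) :
    piKronecker (fun i => c i • A i) = (∏ i, c i) • piKronecker A := by
  ext x y
  simp only [piKronecker, smul_apply, smul_eq_mul, Finset.prod_mul_distrib]

theorem conjTranspose_piKronecker [CommMonoid R] [StarMul R] (A : ι → Matrix n n R) :
    (piKronecker A)ᴴ = piKronecker (fun i => (A i)ᴴ) := by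
  ext x y
  simp only [piKronecker, conjTranspose_apply, star_prod]

end Matrix

section frobSq

variable {n : Type*} [Fintype n]

theorem ofReal_frobSq (N : Matrix n n ℂ) :
    (frobSq N : ℂ) = (Nᴴ * N).trace := by
  rw [frobSq, Finset.sum_comm]
  simp [Matrix.trace, Matrix.mul_apply, Complex.conj_mul']

theorem frobSq_eq_re_trace (N : Matrix n n ℂ) :
    frobSq N = (Nᴴ * N).trace.re := by
  rw [← ofReal_frobSq, Complex.ofReal_re]

theorem frobSq_smul (c : ℂ) (N : Matrix n n ℂ) :
    frobSq (c • N) = ‖c‖ ^ 2 * frobSq N := by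
  simp only [frobSq, Matrix.smul_apply, smul_eq_mul, norm_mul, mul_pow, Finset.mul_sum]

theorem frobSq_sub (A B : Matrix n n ℂ) :
    frobSq (A - B) = frobSq A + frobSq B - 2 * (Bᴴ * A).trace.re := by
  have hswap : (Aᴴ * B).trace.re = (Bᴴ * A).trace.re := by
    rw [← Complex.conj_re, ← Complex.star_def, ← Matrix.trace_conjTranspose,
      Matrix.conjTranspose_mul, Matrix.conjTranspose_conjTranspose]
  simp only [frobSq_eq_re_trace, Matrix.conjTranspose_sub, Matrix.sub_mul, Matrix.mul_sub,
    Matrix.trace_sub, Complex.sub_re]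
  linarith

theorem frobSq_of_mem_unitaryGroup [DecidableEq n] {U : Matrix n n ℂ}
    (hU : U ∈ Matrix.unitaryGroup n ℂ) : frobSq U = Fintype.card n := by
  rw [frobSq_eq_re_trace, ← Matrix.star_eq_conjTranspose, Matrix.mem_unitaryGroup_iff'.mp hU]
  simp

theorem frobSq_mul_of_mem_unitaryGroup [DecidableEq n]
    {U : Matrix n n ℂ} (hU : U ∈ Matrix.unitaryGroup n ℂ) (N : Matrix n n ℂ) :
    frobSq (U * N) = frobSq N := by
  have hUU : Uᴴ * U = 1 := Matrix.mem_unitaryGroup_iff'.mp hU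
  rw [frobSq_eq_re_trace, frobSq_eq_re_trace, Matrix.conjTranspose_mul, Matrix.mul_assoc,
    ← Matrix.mul_assoc Uᴴ, hUU, Matrix.one_mul]

theorem frobSq_sub_exp_arg_smul (A B : Matrix n n ℂ) :
    frobSq (A - Complex.exp ((Bᴴ * A).trace.arg * Complex.I) • B)
      = frobSq A + frobSq B - 2 * ‖(Bᴴ * A).trace‖ := by
  set z := (Bᴴ * A).trace
  have hphase : ‖Complex.exp (z.arg * Complex.I)‖ = 1 := Complex.norm_exp_ofReal_mul_I _
  have hz : (starRingEnd ℂ) (Complex.exp (z.arg * Complex.I)) * z = ‖z‖ := by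
    conv_lhs => arg 2; rw [← Complex.norm_mul_exp_arg_mul_I z]
    rw [mul_left_comm, ← Complex.normSq_eq_conj_mul_self, Complex.normSq_eq_norm_sq, hphase]
    simp
  rw [frobSq_sub, frobSq_smul, hphase, Matrix.conjTranspose_smul, Matrix.smul_mul,
    Matrix.trace_smul, smul_eq_mul, Complex.star_def, hz]
  simp

end frobSq

theorem sum_normSq_sum_mul_of_sum_mul_conj {ι κ : Type*} [Fintype ι] [Fintype κ] [DecidableEq κ]
    (b : ι → κ → ℂ) (c : ℝ)
    (hb : ∀ q r, ∑ s, b s q * (starRingEnd ℂ) (b s r) = if q = r then (c : ℂ) else 0)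
    (v : κ → ℂ) :
    ∑ s, Complex.normSq (∑ q, b s q * v q) = c * ∑ q, Complex.normSq (v q) := by
  apply Complex.ofReal_injective
  push_cast
  simp_rw [← Complex.mul_conj, map_sum, map_mul, Finset.sum_mul_sum, Finset.mul_sum]
  rw [Finset.sum_comm]
  refine Finset.sum_congr rfl fun q _ => ?_
  rw [Finset.sum_comm]
  calc ∑ r, ∑ s, b s q * v q * ((starRingEnd ℂ) (b s r) * (starRingEnd ℂ) (v r))
      = ∑ r, (∑ s, b s q * (starRingEnd ℂ) (b s r)) * (v q * (starRingEnd ℂ) (v r)) := by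
        simp only [Finset.sum_mul, mul_mul_mul_comm]
    _ = c * (v q * (starRingEnd ℂ) (v q)) := by
        simp only [hb, ite_mul, zero_mul, Finset.sum_ite_eq, Finset.mem_univ, if_true]

theorem sum_erase_le_card_mul_of_cover {α ι : Type*} [Fintype α] [DecidableEq α] [Fintype ι]
    {f : α → ℝ} (hf : ∀ t, 0 ≤ f t) (a : α) (S : ι → Finset α) (hS : ∀ t ≠ a, ∃ i, t ∈ S i)
    {B : ℝ} (hB : ∀ i, ∑ t ∈ S i, f t ≤ B) :
    ∑ t ∈ Finset.univ.erase a, f t ≤ Fintype.card ι * B := by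
  have hind : ∀ t, 0 ≤ ∑ i, if t ∈ S i then f t else 0 := fun t =>
    Finset.sum_nonneg fun i _ => by split_ifs <;> simp [hf]
  calc ∑ t ∈ Finset.univ.erase a, f t
      ≤ ∑ t ∈ Finset.univ.erase a, ∑ i, if t ∈ S i then f t else 0 := by
        refine Finset.sum_le_sum fun t ht => ?_
        obtain ⟨i, hi⟩ := hS t (Finset.ne_of_mem_erase ht)
        refine le_of_eq_of_le (if_pos hi).symm (Finset.single_le_sum
          (f := fun i => if t ∈ S i then f t else 0) (fun j _ => ?_) (Finset.mem_univ i))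
        split_ifs <;> simp [hf]
    _ ≤ ∑ t, ∑ i, if t ∈ S i then f t else 0 :=
        Finset.sum_le_sum_of_subset_of_nonneg (Finset.subset_univ _) fun t _ _ => hind t
    _ = ∑ i, ∑ t ∈ S i, f t := by
        rw [Finset.sum_comm]
        simp only [Finset.sum_ite_mem, Finset.univ_inter]
    _ ≤ Fintype.card ι * B := by
        simpa using Finset.sum_le_sum fun i (_ : i ∈ Finset.univ) => hB i

theorem two_mul_sub_two_mul_le {T r Δ D : ℝ} (hT : 0 < T) (hr : 0 ≤ r) (hsum : r ^ 2 + Δ = T ^ 2)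
    (hΔ0 : 0 ≤ Δ) (hΔ : Δ ≤ D) :
    2 * T - 2 * r ≤ D / T + D ^ 2 / T ^ 3 := by
  have hrT : r ≤ T := by nlinarith
  have hu : (T - r) * T ≤ D := by nlinarith
  have hu' : T - r ≤ D / T := by rwa [le_div_iff₀ hT]
  have hsq : (T - r) ^ 2 ≤ (D / T) ^ 2 := pow_le_pow_left₀ (by linarith) hu' 2
  have hkey : (2 * T - 2 * r) * T = Δ + (T - r) ^ 2 := by nlinarith
  rw [show D / T + D ^ 2 / T ^ 3 = (D + (D / T) ^ 2) / T by field_simp, le_div_iff₀ hT]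
  linarith

def pauliAnticommutes (p q : Fin 4) : Bool := p ≠ 0 && q ≠ 0 && p ≠ q

def boolSign (b : Bool) : ℂ := if b then -1 else 1

theorem normSq_boolSign_sub (b b' : Bool) :
    Complex.normSq (boolSign b - boolSign b') = if b = b' then 0 else 4 := by
  cases b <;> cases b' <;> norm_num [boolSign]

theorem pauli_conjTranspose (p : Fin 4) : (pauli p)ᴴ = pauli p := by
  fin_cases p <;> ext a b <;> fin_cases a <;> fin_cases b <;> simp [pauli]

theorem pauli_mul_self (p : Fin 4) : pauli p * pauli p = 1 := by
  fin_cases p <;> ext a b <;> fin_cases a <;> fin_cases b <;>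
    simp [pauli, Matrix.mul_apply, Fin.sum_univ_two]

theorem pauli_mul_pauli_mul_pauli (p q : Fin 4) :
    pauli p * pauli q * pauli p = boolSign (pauliAnticommutes p q) • pauli q := by
  fin_cases p <;> fin_cases q <;> ext a b <;> fin_cases a <;> fin_cases b <;>
    simp [pauli, pauliAnticommutes, boolSign, Matrix.mul_apply, Fin.sum_univ_two]

theorem sum_pauli_mul_conj (q r : Fin 2 × Fin 2) :
    ∑ p, pauli p q.1 q.2 * (starRingEnd ℂ) (pauli p r.1 r.2) = if q = r then 2 else 0 := by
  obtain ⟨a, b⟩ := q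
  obtain ⟨a', b'⟩ := r
  fin_cases a <;> fin_cases b <;> fin_cases a' <;> fin_cases b' <;>
    simp [Fin.sum_univ_four, pauli] <;> norm_num

theorem pauliString_eq_piKronecker {k : ℕ} (s : Fin k → Fin 4) :
    pauliString s = piKronecker (fun i => pauli (s i)) := rfl

theorem pauliString_conjTranspose {k : ℕ} (s : Fin k → Fin 4) :
    (pauliString s)ᴴ = pauliString s := by
  simp only [pauliString_eq_piKronecker, conjTranspose_piKronecker, pauli_conjTranspose]

theorem pauliString_mul_self {k : ℕ} (s : Fin k → Fin 4) :
    pauliString s * pauliString s = 1 := by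
  simp only [pauliString_eq_piKronecker, piKronecker_mul, pauli_mul_self, piKronecker_one]

theorem pauliString_mem_unitaryGroup {k : ℕ} (s : Fin k → Fin 4) :
    pauliString s ∈ Matrix.unitaryGroup (Fin k → Fin 2) ℂ := by
  rw [Matrix.mem_unitaryGroup_iff', Matrix.star_eq_conjTranspose, pauliString_conjTranspose,
    pauliString_mul_self]

theorem pauliString_mul_pauliString_mul_pauliString {k : ℕ} (g t : Fin k → Fin 4) :
    pauliString g * pauliString t * pauliString g
      = (∏ j, boolSign (pauliAnticommutes (g j) (t j))) • pauliString t := by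
  simp only [pauliString_eq_piKronecker, piKronecker_mul, pauli_mul_pauli_mul_pauli,
    piKronecker_smul]

theorem sum_pauliString_mul_conj {k : ℕ} (q r : (Fin k → Fin 2) × (Fin k → Fin 2)) :
    ∑ s, pauliString s q.1 q.2 * (starRingEnd ℂ) (pauliString s r.1 r.2)
      = if q = r then 2 ^ k else 0 := by
  simp only [pauliString, map_prod, ← Finset.prod_mul_distrib]
  rw [← Fintype.prod_sum
    (fun i p => pauli p (q.1 i) (q.2 i) * (starRingEnd ℂ) (pauli p (r.1 i) (r.2 i)))]
  have hpointwise : (∀ i, (q.1 i, q.2 i) = (r.1 i, r.2 i)) ↔ q = r := by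
    simp only [Prod.ext_iff, funext_iff, forall_and]
  simp only [fun i => sum_pauli_mul_conj (q.1 i, q.2 i) (r.1 i, r.2 i), Fintype.prod_ite_zero,
    if_congr hpointwise rfl rfl, Finset.prod_const, Finset.card_univ, Fintype.card_fin]

theorem sum_normSq_trace_pauliString_mul {k : ℕ} (N : Matrix (Fin k → Fin 2) (Fin k → Fin 2) ℂ) :
    ∑ s, Complex.normSq (pauliString s * N).trace = 2 ^ k * frobSq N := by
  have htrace : ∀ s, (pauliString s * N).trace
      = ∑ q : (Fin k → Fin 2) × (Fin k → Fin 2), pauliString s q.1 q.2 * N q.2 q.1 := by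
    intro s
    simp [Matrix.trace, Matrix.mul_apply, Fintype.sum_prod_type]
  have hframe := sum_normSq_sum_mul_of_sum_mul_conj
    (fun s (q : (Fin k → Fin 2) × (Fin k → Fin 2)) => pauliString s q.1 q.2) (2 ^ k)
    (fun q r => by rw [sum_pauliString_mul_conj]; push_cast; rfl) (fun q => N q.2 q.1)
  simp_rw [htrace]
  rw [hframe, frobSq, Fintype.sum_prod_type, Finset.sum_comm]
  simp [Complex.normSq_eq_norm_sq]

theorem two_pow_mul_frobSq_mul_sub_smul_mul {k : ℕ} (M : Matrix (Fin k → Fin 2) (Fin k → Fin 2) ℂ)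
    (g : Fin k → Fin 4) (e : ℂ) :
    2 ^ k * frobSq (M * pauliString g - e • (pauliString g * M))
      = ∑ t, Complex.normSq (∏ j, boolSign (pauliAnticommutes (g j) (t j)) - e)
          * Complex.normSq (pauliString t * M).trace := by
  have hfactor : M * pauliString g - e • (pauliString g * M)
      = pauliString g * (pauliString g * M * pauliString g - e • M) := by
    rw [Matrix.mul_sub, ← Matrix.mul_assoc, ← Matrix.mul_assoc, pauliString_mul_self,
      Matrix.one_mul, Matrix.mul_smul]
  have hcoeff : ∀ t, (pauliString t * (pauliString g * M * pauliString g - e • M)).trace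
      = (∏ j, boolSign (pauliAnticommutes (g j) (t j)) - e) * (pauliString t * M).trace := by
    intro t
    rw [Matrix.mul_sub, Matrix.trace_sub, Matrix.mul_smul, Matrix.trace_smul, smul_eq_mul,
      ← Matrix.mul_assoc, ← Matrix.mul_assoc, Matrix.trace_mul_comm, ← Matrix.mul_assoc,
      ← Matrix.mul_assoc, pauliString_mul_pauliString_mul_pauliString, Matrix.smul_mul,
      Matrix.trace_smul, smul_eq_mul, sub_mul]
  rw [hfactor, frobSq_mul_of_mem_unitaryGroup (pauliString_mem_unitaryGroup g),
    ← sum_normSq_trace_pauliString_mul]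
  simp only [hcoeff, Complex.normSq_mul]

noncomputable def pauliAt {k : ℕ} (i : Fin k) (p : Fin 4) :
    Matrix (Fin k → Fin 2) (Fin k → Fin 2) ℂ :=
  pauliString (fun j => if j = i then p else 0)

theorem prod_boolSign_pauliAnticommutes_single {k : ℕ} (i : Fin k) (p : Fin 4)
    (t : Fin k → Fin 4) :
    ∏ j, boolSign (pauliAnticommutes (if j = i then p else 0) (t j))
      = boolSign (pauliAnticommutes p (t i)) := by
  rw [Fintype.prod_eq_single i fun j hj => by simp [hj, pauliAnticommutes, boolSign], if_pos rfl]

theorem four_mul_sum_normSq_trace_filter {k : ℕ} (M : Matrix (Fin k → Fin 2) (Fin k → Fin 2) ℂ)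
    (i : Fin k) (p : Fin 4) (b : Bool) :
    4 * ∑ t with pauliAnticommutes p (t i) ≠ b, Complex.normSq (pauliString t * M).trace
      = 2 ^ k * frobSq (M * pauliAt i p - boolSign b • (pauliAt i p * M)) := by
  rw [pauliAt, two_pow_mul_frobSq_mul_sub_smul_mul, Finset.mul_sum, Finset.sum_filter]
  refine Finset.sum_congr rfl fun t _ => ?_
  rw [prod_boolSign_pauliAnticommutes_single, normSq_boolSign_sub]
  split_ifs <;> simp_all

theorem exists_sum_normSq_trace_filter_le {k : ℕ} (M : Matrix (Fin k → Fin 2) (Fin k → Fin 2) ℂ)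
    (i : Fin k) (p : Fin 4) {ε : ℝ}
    (h : min (frobSq (M * pauliAt i p - pauliAt i p * M))
      (frobSq (M * pauliAt i p + pauliAt i p * M)) ≤ ε) :
    ∃ b, ∑ t with pauliAnticommutes p (t i) ≠ b, Complex.normSq (pauliString t * M).trace
      ≤ 2 ^ k * ε / 4 := by
  obtain ⟨b, hb⟩ : ∃ b, frobSq (M * pauliAt i p - boolSign b • (pauliAt i p * M)) ≤ ε := by
    rcases min_le_iff.mp h with h | h
    · exact ⟨false, by simpa [boolSign] using h⟩
    · exact ⟨true, by simpa [boolSign] using h⟩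
  refine ⟨b, ?_⟩
  have hweight := four_mul_sum_normSq_trace_filter M i p b
  have hscaled := mul_le_mul_of_nonneg_left hb (by positivity : (0 : ℝ) ≤ 2 ^ k)
  linarith

def pauliOfAnticommutes : Bool → Bool → Fin 4
  | false, false => 0
  | false, true => 1
  | true, true => 2
  | true, false => 3

theorem pauliOfAnticommutes_anticommutes (q : Fin 4) :
    pauliOfAnticommutes (pauliAnticommutes 1 q) (pauliAnticommutes 3 q) = q := by
  fin_cases q <;> rfl

theorem exists_pauliAnticommutes_ne_of_ne {k : ℕ} {bX bZ : Fin k → Bool} {t : Fin k → Fin 4}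
    (ht : t ≠ fun i => pauliOfAnticommutes (bX i) (bZ i)) :
    ∃ i, pauliAnticommutes 1 (t i) ≠ bX i ∨ pauliAnticommutes 3 (t i) ≠ bZ i := by
  obtain ⟨i, hi⟩ := Function.ne_iff.mp ht
  refine ⟨i, not_and_or.mp fun h => hi ?_⟩
  rw [← pauliOfAnticommutes_anticommutes (t i), h.1, h.2]

theorem exists_sum_erase_normSq_trace_le {k : ℕ} (M : Matrix (Fin k → Fin 2) (Fin k → Fin 2) ℂ)
    {ε : ℝ}
    (hX : ∀ i : Fin k,
      min (frobSq (M * XAt i - XAt i * M)) (frobSq (M * XAt i + XAt i * M)) ≤ ε)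
    (hZ : ∀ i : Fin k,
      min (frobSq (M * ZAt i - ZAt i * M)) (frobSq (M * ZAt i + ZAt i * M)) ≤ ε) :
    ∃ s, ∑ t ∈ Finset.univ.erase s, Complex.normSq (pauliString t * M).trace
      ≤ (k + k) * (2 ^ k * ε / 4) := by
  classical
  choose bX hbX using fun i => exists_sum_normSq_trace_filter_le M i 1 (hX i)
  choose bZ hbZ using fun i => exists_sum_normSq_trace_filter_le M i 3 (hZ i)
  let S : Fin k ⊕ Fin k → Finset (Fin k → Fin 4) :=
    Sum.elim (fun i => Finset.univ.filter fun t => pauliAnticommutes 1 (t i) ≠ bX i)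
      (fun i => Finset.univ.filter fun t => pauliAnticommutes 3 (t i) ≠ bZ i)
  have hcover : ∀ t ≠ fun i => pauliOfAnticommutes (bX i) (bZ i), ∃ j, t ∈ S j := by
    intro t ht
    obtain ⟨i, hi | hi⟩ := exists_pauliAnticommutes_ne_of_ne ht
    · exact ⟨Sum.inl i, by simpa [S] using hi⟩
    · exact ⟨Sum.inr i, by simpa [S] using hi⟩
  refine ⟨fun i => pauliOfAnticommutes (bX i) (bZ i), ?_⟩
  simpa using sum_erase_le_card_mul_of_cover (fun _ => Complex.normSq_nonneg _) _ S hcover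
    (Sum.forall.mpr ⟨hbX, hbZ⟩)

theorem approx_commute_with_Pauli_then_Pauli_general {k : ℕ}
    (M : Matrix (Fin k → Fin 2) (Fin k → Fin 2) ℂ)
    (hM : M ∈ Matrix.unitaryGroup (Fin k → Fin 2) ℂ)
    (ε : ℝ)
    (hX : ∀ i : Fin k,
      min (frobSq (M * XAt i - XAt i * M)) (frobSq (M * XAt i + XAt i * M)) ≤ ε)
    (hZ : ∀ i : Fin k,
      min (frobSq (M * ZAt i - ZAt i * M)) (frobSq (M * ZAt i + ZAt i * M)) ≤ ε) :
    ∃ (θ : ℝ) (s : Fin k → Fin 4),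
      frobSq (M - Complex.exp (θ * Complex.I) • pauliString s)
        ≤ (k / 2 : ℝ) * ε + 2 ^ (-(k : ℤ) - 2) * (k : ℝ) ^ 2 * ε ^ 2 := by
  obtain ⟨s, hΔ⟩ := exists_sum_erase_normSq_trace_le M hX hZ
  set a : (Fin k → Fin 4) → ℂ := fun t => (pauliString t * M).trace
  have hparseval : ‖a s‖ ^ 2 + ∑ t ∈ Finset.univ.erase s, Complex.normSq (a t) = (2 ^ k) ^ 2 := by
    rw [← Complex.normSq_eq_norm_sq, Finset.add_sum_erase _ (fun t => Complex.normSq (a t))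
      (Finset.mem_univ s), sum_normSq_trace_pauliString_mul, frobSq_of_mem_unitaryGroup hM]
    simp [sq]
  have hbound := two_mul_sub_two_mul_le (by positivity : (0 : ℝ) < 2 ^ k) (norm_nonneg (a s))
    hparseval (Finset.sum_nonneg fun t _ => Complex.normSq_nonneg (a t)) hΔ
  refine ⟨(a s).arg, s, ?_⟩
  have hdist := frobSq_sub_exp_arg_smul M (pauliString s)
  rw [pauliString_conjTranspose, frobSq_of_mem_unitaryGroup hM,
    frobSq_of_mem_unitaryGroup (pauliString_mem_unitaryGroup s)] at hdist
  rw [hdist]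
  convert hbound using 1
  · simp only [Fintype.card_fun, Fintype.card_fin]
    push_cast
    ring
  · rw [zpow_sub₀ two_ne_zero, _root_.zpow_neg, zpow_natCast]
    field_simp
    ring

/-- If a unitary M on k qubits almost commutes or almost anticommutes
(up to ε in squared Frobenius norm) with every element of G_k = {X_1,...,X_k,Z_1,...,Z_k},
where 0 ≤ ε ≤ 2^{k+1}/k, then M is within squared Frobenius distance
(k/2)·ε + 2^{-k-2}·k²·ε² of some phase times a Pauli string. -/
theorem approx_commute_with_Pauli_then_Pauli {k : ℕ} (hk : 1 ≤ k)
    (M : Matrix (Fin k → Fin 2) (Fin k → Fin 2) ℂ)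
    (hM : M ∈ Matrix.unitaryGroup (Fin k → Fin 2) ℂ)
    (ε : ℝ) (hε0 : 0 ≤ ε) (hεsmall : ε ≤ 2 ^ (k + 1) / k)
    (hX : ∀ i : Fin k,
      min (frobSq (M * XAt i - XAt i * M)) (frobSq (M * XAt i + XAt i * M)) ≤ ε)
    (hZ : ∀ i : Fin k,
      min (frobSq (M * ZAt i - ZAt i * M)) (frobSq (M * ZAt i + ZAt i * M)) ≤ ε) :
    ∃ (θ : ℝ) (s : Fin k → Fin 4),
      frobSq (M - Complex.exp (θ * Complex.I) • pauliString s)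
        ≤ (k / 2 : ℝ) * ε + 2 ^ (-(k : ℤ) - 2) * (k : ℝ) ^ 2 * ε ^ 2 :=
  approx_commute_with_Pauli_then_Pauli_general M hM ε hX hZ
end

section
/- For every integer g ≥ 2, the positive integer GSD(g) = 2·6^{2g−2} + 4·3^{2g−2} + 2·2^{2g−2} has a prime factor p such that p does not divide 6. -/
/-! Writing `k = 2g - 2 ≥ 2`, one has `GSD = 4 · (x y + x + y)` with `x = 2^(k-1)` and `y = 3^k`.
Modulo 2 the cofactor is `≡ y`, modulo 3 it is `≡ x`, so it is a number `> 1` coprime to 6, and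
any of its prime factors works. -/

theorem Nat.exists_prime_dvd_not_dvd_of_coprime {n k : ℕ} (hn : n ≠ 1) (h : n.Coprime k) :
    ∃ p, p.Prime ∧ p ∣ n ∧ ¬ p ∣ k := by
  obtain ⟨p, hp, hpn⟩ := Nat.exists_prime_and_dvd hn
  exact ⟨p, hp, hpn, (hp.coprime_iff_not_dvd).mp (h.coprime_dvd_left hpn)⟩

theorem Nat.not_dvd_mul_add_add {d x y : ℕ} (hx : d ∣ x) (hy : ¬ d ∣ y) :
    ¬ d ∣ x * y + x + y :=
  fun h ↦ hy ((Nat.dvd_add_right (dvd_add (hx.mul_right y) hx)).mp h)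

theorem Nat.coprime_two_pow_mul_three_pow_add_add_six {a b : ℕ} (ha : a ≠ 0) (hb : b ≠ 0) :
    Nat.Coprime (2 ^ a * 3 ^ b + 2 ^ a + 3 ^ b) 6 := by
  have h2 : ¬ 2 ∣ 2 ^ a * 3 ^ b + 2 ^ a + 3 ^ b :=
    Nat.not_dvd_mul_add_add (dvd_pow_self 2 ha)
      (fun h ↦ by simpa using Nat.prime_two.dvd_of_dvd_pow h)
  have h3 : ¬ 3 ∣ 2 ^ a * 3 ^ b + 2 ^ a + 3 ^ b := by
    rw [show 2 ^ a * 3 ^ b + 2 ^ a + 3 ^ b = 3 ^ b * 2 ^ a + 3 ^ b + 2 ^ a by ring]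
    exact Nat.not_dvd_mul_add_add (dvd_pow_self 3 hb)
      (fun h ↦ by simpa using Nat.prime_three.dvd_of_dvd_pow h)
  rw [show (6 : ℕ) = 2 * 3 from rfl]
  exact .mul_right (Nat.prime_two.coprime_iff_not_dvd.mpr h2).symm
    (Nat.prime_three.coprime_iff_not_dvd.mpr h3).symm

theorem gsd_eq_four_mul (j : ℕ) :
    2 * 6 ^ (j + 2) + 4 * 3 ^ (j + 2) + 2 * 2 ^ (j + 2) =
      4 * (2 ^ (j + 1) * 3 ^ (j + 2) + 2 ^ (j + 1) + 3 ^ (j + 2)) := by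
  rw [show (6 : ℕ) = 2 * 3 from rfl, mul_pow, pow_succ 2 (j + 1)]
  ring

/-- For every integer g ≥ 2, the number
GSD(g) = 2·6^{2g−2} + 4·3^{2g−2} + 2·2^{2g−2} has a prime factor p with p ∤ 6. -/
theorem gsd_has_prime_factor_not_dividing_six (g : ℕ) (hg : 2 ≤ g) :
    ∃ p : ℕ, p.Prime ∧
      p ∣ (2 * 6 ^ (2 * g - 2) + 4 * 3 ^ (2 * g - 2) + 2 * 2 ^ (2 * g - 2)) ∧
      ¬ p ∣ 6 := by
  obtain ⟨j, hj⟩ : ∃ j, 2 * g - 2 = j + 2 := ⟨2 * g - 4, by omega⟩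
  rw [hj, gsd_eq_four_mul]
  have hne : 2 ^ (j + 1) * 3 ^ (j + 2) + 2 ^ (j + 1) + 3 ^ (j + 2) ≠ 1 :=
    ne_of_gt (Nat.lt_add_right _ (Nat.lt_add_left _ (Nat.one_lt_two_pow j.succ_ne_zero)))
  obtain ⟨p, hp, hpn, hp6⟩ := Nat.exists_prime_dvd_not_dvd_of_coprime hne
    (Nat.coprime_two_pow_mul_three_pow_add_add_six j.succ_ne_zero (j + 1).succ_ne_zero)
  exact ⟨p, hp, hpn.mul_left 4, hp6⟩
end

section
/- Let K ≥ 1 be an integer and let b, c be real numbers with −1 ≤ c ≤ 1. Then the following are equivalent: (i) there exist 2^K × 2^K complex matrices E and F with 0 ≤ E ≤ I and 0 ≤ F ≤ I (i.e., E, F and I − E, I − F are positive semidefinite), Tr(E) = Tr(F) = (1+c)·2^{K−1}, and Tr(Eᵀ F) = (1+2c+b)·2^{K−2}; (ii) 1 + 2c + b ≥ 0, 1 − 2c + b ≥ 0, and for every integer l with 0 ≤ l ≤ 2^K − 1, (1+2c+b)·2^{K−2} ≤ l + ((1+c)·2^{K−1} − l)². -/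
/-!
For effects `A`, `B` (`0 ≤ A, B ≤ 1`) of equal trace `t` on an `N`-dimensional space, the real part
of `Tr (A B)` fills exactly the interval `[max 0 (2t - N), ⌊t⌋ + {t}²]`. The lower bounds are
`Tr (A B) ≥ 0` and `Tr ((1 - A)(1 - B)) ≥ 0`. For the upper bound, `2 Tr (A B) ≤ Tr A² + Tr B²`,
and `Tr A² = ∑ λᵢ²` over eigenvalues `λᵢ ∈ [0, 1]` summing to `t`; since `x ↦ ⌊x⌋ + {x}²` is
superadditive and dominates `x²` on `[0, 1]`, this sum is at most `⌊t⌋ + {t}²`, which in turn is at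
most `l + (t - l)²` for every integer `l`, with equality when `l ≤ t ≤ l + 1`. Conversely, diagonal
effects attain both ends of the interval, and the pairs of admissible diagonals form a convex set,
so the intermediate value theorem gives every value in between. The theorem is the case
`N = 2^K`, `A = Eᵀ`, `B = F`.
-/

open Matrix
open scoped ComplexOrder

noncomputable def floorAddFractSq (t : ℝ) : ℝ := ⌊t⌋ + Int.fract t ^ 2

lemma sq_le_floorAddFractSq {x : ℝ} (h0 : 0 ≤ x) (h1 : x ≤ 1) : x ^ 2 ≤ floorAddFractSq x := by
  rcases h1.eq_or_lt with rfl | h1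
  · simp [floorAddFractSq]
  · simp [floorAddFractSq, Int.floor_eq_zero_iff.2 ⟨h0, h1⟩, Int.fract_eq_self.2 ⟨h0, h1⟩]

lemma floorAddFractSq_add_le (x y : ℝ) :
    floorAddFractSq x + floorAddFractSq y ≤ floorAddFractSq (x + y) := by
  obtain ⟨z, hz⟩ := Int.fract_add x y
  have hfloor : (⌊x + y⌋ : ℝ) = ⌊x⌋ + ⌊y⌋ - z := by
    linarith [Int.floor_add_fract (x + y), Int.floor_add_fract x, Int.floor_add_fract y]
  have hz0 : (z : ℝ) ≤ 0 := by linarith [Int.fract_add_le x y]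
  have hz1 : (-1 : ℝ) ≤ z := by linarith [Int.fract_add_fract_le x y]
  have hfx := Int.fract_nonneg x
  have hfy := Int.fract_nonneg y
  have hfx1 := Int.fract_lt_one x
  have hfy1 := Int.fract_lt_one y
  simp only [floorAddFractSq, hfloor, show Int.fract (x + y) = Int.fract x + Int.fract y + z by
    linarith]
  obtain rfl | rfl : z = -1 ∨ z = 0 := by
    have : (-1 : ℤ) ≤ z := by exact_mod_cast hz1
    have : z ≤ 0 := by exact_mod_cast hz0
    omega
  · push_cast
    nlinarith [mul_nonneg (sub_nonneg.2 hfx1.le) (sub_nonneg.2 hfy1.le)]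
  · push_cast
    nlinarith [mul_nonneg hfx hfy]

lemma floorAddFractSq_le (t : ℝ) (l : ℤ) : floorAddFractSq t ≤ l + (t - l) ^ 2 := by
  have hfr0 := Int.fract_nonneg t
  have hfr1 := Int.fract_lt_one t
  obtain ⟨d, rfl⟩ : ∃ d : ℤ, l = ⌊t⌋ - d := ⟨⌊t⌋ - l, by ring⟩
  have hd : d ≤ -1 ∨ d = 0 ∨ 1 ≤ d := by omega
  have hkey : (0 : ℝ) ≤ d * (d + 2 * Int.fract t - 1) := by
    rcases hd with hd | rfl | hd
    · have : (d : ℝ) ≤ -1 := by exact_mod_cast hd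
      nlinarith
    · simp
    · have : (1 : ℝ) ≤ d := by exact_mod_cast hd
      nlinarith
  have ht : t - ↑(⌊t⌋ - d) = d + Int.fract t := by
    push_cast
    linarith [Int.floor_add_fract t]
  rw [floorAddFractSq, ht]
  push_cast
  nlinarith

def unitCubeSlice (ι : Type*) [Fintype ι] (t : ℝ) : Set (ι → ℝ) :=
  {x | (∀ i, x i ∈ Set.Icc 0 1) ∧ ∑ i, x i = t}

section unitCubeSlice

variable {ι : Type*} [Fintype ι] {t : ℝ}

lemma convex_unitCubeSlice : Convex ℝ (unitCubeSlice ι t) := by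
  have hcube : Convex ℝ (Set.univ.pi fun _ : ι => Set.Icc (0 : ℝ) 1) :=
    convex_pi fun _ _ => convex_Icc 0 1
  have hsum : Convex ℝ {x : ι → ℝ | ∑ i, x i = t} :=
    convex_hyperplane (f := fun x : ι → ℝ => ∑ i, x i)
      ⟨fun x y => Finset.sum_add_distrib, fun c x => (Finset.mul_sum _ _ _).symm⟩ t
  convert hcube.inter hsum using 1
  ext x
  simp only [unitCubeSlice, Set.mem_inter_iff, Set.mem_univ_pi, Set.mem_ofPred_eq]

lemma sum_sq_le_floorAddFractSq {x : ι → ℝ} (hx : x ∈ unitCubeSlice ι t) :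
    ∑ i, x i ^ 2 ≤ floorAddFractSq t := by
  have hsuper := Finset.le_sum_of_subadditive (fun s => -floorAddFractSq s)
    (by simp [floorAddFractSq]) (fun a b => by linarith [floorAddFractSq_add_le a b])
    Finset.univ x
  simp only [Finset.sum_neg_distrib, neg_le_neg_iff, hx.2] at hsuper
  exact (Finset.sum_le_sum fun i _ => sq_le_floorAddFractSq (hx.1 i).1 (hx.1 i).2).trans hsuper

variable [DecidableEq ι]

lemma exists_mem_unitCubeSlice_sum_sq_eq {l : ℕ} (hl : l < Fintype.card ι) (hlt : (l : ℝ) ≤ t)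
    (htl : t ≤ l + 1) : ∃ x ∈ unitCubeSlice ι t, ∑ i, x i ^ 2 = l + (t - l) ^ 2 := by
  obtain ⟨s, -, hs⟩ :=
    Finset.exists_subset_card_eq (s := (Finset.univ : Finset ι)) (n := l) (by simpa using hl.le)
  obtain ⟨j, hj⟩ : sᶜ.Nonempty := by
    rw [← Finset.card_pos, Finset.card_compl]
    omega
  set x : ι → ℝ := fun i => if i ∈ s then 1 else if i = j then t - l else 0
  have hsum : ∀ g : ℝ → ℝ, g 0 = 0 → ∑ i, g (x i) = l * g 1 + g (t - l) := by
    intro g hg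
    have hcompl : ∀ i ∈ sᶜ, g (x i) = if j = i then g (t - l) else 0 := by
      intro i hi
      rw [Finset.mem_compl] at hi
      by_cases hij : j = i <;> simp [x, hi, hij, eq_comm, hg]
    rw [← Finset.sum_add_sum_compl s, Finset.sum_congr rfl hcompl, Finset.sum_ite_eq, if_pos hj,
      Finset.sum_congr rfl fun i hi => congrArg g (if_pos hi), Finset.sum_const, hs, nsmul_eq_mul]
  refine ⟨x, ⟨fun i => ?_, ?_⟩, ?_⟩
  · simp only [x]
    split_ifs <;> constructor <;> linarith
  · simpa using hsum id rfl
  · simpa only [one_pow, mul_one] using hsum (· ^ 2) (zero_pow two_ne_zero)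

lemma exists_mem_unitCubeSlice_sum_mul_eq_max (heven : Even (Fintype.card ι)) (ht0 : 0 ≤ t)
    (htN : t ≤ Fintype.card ι) :
    ∃ x ∈ unitCubeSlice ι t, ∃ y ∈ unitCubeSlice ι t,
      ∑ i, x i * y i = max 0 (2 * t - Fintype.card ι) := by
  obtain ⟨m, hm⟩ := heven
  obtain ⟨s, -, hs⟩ :=
    Finset.exists_subset_card_eq (s := (Finset.univ : Finset ι)) (n := m) (by simp [hm])
  have hsum : ∀ p q : ℝ, ∑ i, (if i ∈ s then p else q) = m * (p + q) := by
    intro p q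
    have : sᶜ.card = m := by rw [Finset.card_compl]; omega
    rw [← Finset.sum_add_sum_compl s, Finset.sum_congr rfl fun i hi => if_pos hi,
      Finset.sum_congr rfl fun i hi => if_neg (Finset.mem_compl.1 hi)]
    simp [this, hs, mul_add]
  have hmt : m * (2 * t / Fintype.card ι) = t := by
    rcases Nat.eq_zero_or_pos m with rfl | hm0
    · rw [hm, Nat.cast_zero] at htN
      simp only [CharP.cast_eq_zero, zero_mul]
      linarith
    · rw [hm]
      push_cast
      field_simp
      ring
  set r := 2 * t / Fintype.card ι
  have hr0 : 0 ≤ r := by positivity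
  have hr2 : r ≤ 2 := div_le_of_le_mul₀ (Nat.cast_nonneg _) zero_le_two (by linarith)
  -- Split `r = 2t/N` into two values in `[0, 1]` with the smallest possible product.
  obtain ⟨a, β, ha, hβ, har, hprod⟩ : ∃ a β : ℝ, a ∈ Set.Icc 0 1 ∧ β ∈ Set.Icc 0 1 ∧ a + β = r ∧
      m * (a * β + β * a) = max 0 (2 * t - Fintype.card ι) := by
    rw [← hmt, hm, Nat.cast_add]
    rcases le_total r 1 with h | h
    · refine ⟨r, 0, ⟨hr0, h⟩, ⟨le_rfl, zero_le_one⟩, add_zero r, ?_⟩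
      rw [max_eq_left (by nlinarith [m.cast_nonneg (α := ℝ)])]
      ring
    · refine ⟨1, r - 1, ⟨zero_le_one, le_rfl⟩, ⟨by linarith, by linarith⟩, by ring, ?_⟩
      rw [max_eq_right (by nlinarith [m.cast_nonneg (α := ℝ)])]
      ring
  refine ⟨fun i => if i ∈ s then a else β, ⟨fun i => by beta_reduce; split_ifs <;> assumption, ?_⟩,
    fun i => if i ∈ s then β else a, ⟨fun i => by beta_reduce; split_ifs <;> assumption, ?_⟩, ?_⟩
  · rw [hsum, har, hmt]
  · rw [hsum, add_comm, har, hmt]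
  · rw [← hprod, ← hsum]
    exact Finset.sum_congr rfl fun i _ => by beta_reduce; split_ifs <;> rfl

theorem exists_mem_unitCubeSlice_sum_mul_eq [Nonempty ι] (heven : Even (Fintype.card ι))
    (ht0 : 0 ≤ t) (htN : t ≤ Fintype.card ι) {S : ℝ} (hS : max 0 (2 * t - Fintype.card ι) ≤ S)
    (hl : ∀ l : ℕ, l < Fintype.card ι → S ≤ l + (t - l) ^ 2) :
    ∃ x ∈ unitCubeSlice ι t, ∃ y ∈ unitCubeSlice ι t, ∑ i, x i * y i = S := by
  obtain ⟨x₀, hx₀, y₀, hy₀, hmin⟩ := exists_mem_unitCubeSlice_sum_mul_eq_max heven ht0 htN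
  obtain ⟨l, hlN, hlt, htl⟩ : ∃ l : ℕ, l < Fintype.card ι ∧ (l : ℝ) ≤ t ∧ t ≤ l + 1 := by
    by_cases h : t < Fintype.card ι
    · exact ⟨⌊t⌋₊, (Nat.floor_lt ht0).2 h, Nat.floor_le ht0, (Nat.lt_floor_add_one t).le⟩
    · have hN := Fintype.card_pos (α := ι)
      refine ⟨Fintype.card ι - 1, by omega, ?_, ?_⟩ <;> push_cast [Nat.cast_sub hN] <;> linarith
  obtain ⟨z, hz, hzz⟩ := exists_mem_unitCubeSlice_sum_sq_eq hlN hlt htl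
  have hconn : IsPreconnected (unitCubeSlice ι t ×ˢ unitCubeSlice ι t) :=
    (convex_unitCubeSlice.prod convex_unitCubeSlice).isPreconnected
  have hcont : Continuous fun p : (ι → ℝ) × (ι → ℝ) => ∑ i, p.1 i * p.2 i := by fun_prop
  obtain ⟨⟨x, y⟩, ⟨hx, hy⟩, hxy⟩ := hconn.intermediate_value (a := (x₀, y₀)) (b := (z, z))
    ⟨hx₀, hy₀⟩ ⟨hz, hz⟩ hcont.continuousOn ⟨hmin ▸ hS, by simpa [← sq, hzz] using hl l hlN⟩
  exact ⟨x, hx, y, hy, hxy⟩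

end unitCubeSlice

namespace Matrix

variable {n 𝕜 : Type*} [DecidableEq n] [RCLike 𝕜]

def IsEffect (E : Matrix n n 𝕜) : Prop := E.PosSemidef ∧ (1 - E).PosSemidef

lemma isEffect_diagonal_ofReal {x : n → ℝ} (hx : ∀ i, x i ∈ Set.Icc 0 1) :
    (diagonal fun i => (x i : 𝕜)).IsEffect := by
  refine ⟨posSemidef_diagonal_iff.2 fun i => RCLike.ofReal_nonneg.2 (hx i).1, ?_⟩
  rw [← diagonal_one, diagonal_sub]
  refine posSemidef_diagonal_iff.2 fun i => ?_
  rw [← RCLike.ofReal_one, ← RCLike.ofReal_sub, RCLike.ofReal_nonneg, sub_nonneg]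
  exact (hx i).2

lemma IsEffect.one_sub {A : Matrix n n 𝕜} (hA : A.IsEffect) : (1 - A).IsEffect :=
  ⟨hA.2, by simpa using hA.1⟩

lemma IsEffect.transpose {A : Matrix n n 𝕜} (hA : A.IsEffect) : Aᵀ.IsEffect :=
  ⟨hA.1.transpose, by simpa using hA.2.transpose⟩

variable [Fintype n]

lemma PosSemidef.trace_mul_nonneg {A B : Matrix n n 𝕜} (hA : A.PosSemidef) (hB : B.PosSemidef) :
    0 ≤ (A * B).trace := by
  open scoped MatrixOrder in
  obtain ⟨X, rfl⟩ := CStarAlgebra.nonneg_iff_eq_star_mul_self.mp hA.nonneg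
  rw [star_eq_conjTranspose, trace_mul_cycle, trace_mul_cycle]
  exact (hB.mul_mul_conjTranspose_same X).trace_nonneg

lemma IsHermitian.two_mul_re_trace_mul_le {A B : Matrix n n 𝕜} (hA : A.IsHermitian)
    (hB : B.IsHermitian) :
    2 * RCLike.re (A * B).trace ≤ RCLike.re (A ^ 2).trace + RCLike.re (B ^ 2).trace := by
  have h := RCLike.nonneg_iff.mp (posSemidef_conjTranspose_mul_self (A - B)).trace_nonneg |>.1
  rw [(hA.sub hB).eq, show (A - B) * (A - B) = A ^ 2 + B ^ 2 - (A * B + B * A) by noncomm_ring,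
    trace_sub, trace_add, trace_add, trace_mul_comm B A] at h
  simp only [map_sub, map_add] at h
  linarith

lemma IsHermitian.trace_pow_eq_sum_eigenvalues_pow {A : Matrix n n 𝕜} (hA : A.IsHermitian)
    (k : ℕ) : (A ^ k).trace = ∑ i, (hA.eigenvalues i : 𝕜) ^ k := by
  conv_lhs => rw [hA.spectral_theorem, ← map_pow, Unitary.conjStarAlgAut_apply, trace_mul_cycle,
    Unitary.coe_star_mul_self, one_mul, diagonal_pow, trace_diagonal]
  rfl

lemma IsHermitian.eigenvalues_le_one {A : Matrix n n 𝕜} (hA : A.IsHermitian)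
    (h : (1 - A).PosSemidef) (i : n) : hA.eigenvalues i ≤ 1 := by
  have hv := h.re_dotProduct_nonneg (hA.eigenvectorBasis i)
  have hnorm : RCLike.re (star ⇑(hA.eigenvectorBasis i) ⬝ᵥ ⇑(hA.eigenvectorBasis i)) = 1 := by
    rw [dotProduct_comm, ← EuclideanSpace.inner_eq_star_dotProduct, inner_self_eq_norm_sq_to_K,
      hA.eigenvectorBasis.orthonormal.1 i]
    simp
  rw [sub_mulVec, one_mulVec, dotProduct_sub, map_sub, ← hA.eigenvalues_eq, hnorm] at hv
  linarith

namespace IsEffect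

variable {A B : Matrix n n 𝕜}

lemma eigenvalues_mem_unitCubeSlice (hA : A.IsEffect) :
    hA.1.1.eigenvalues ∈ unitCubeSlice n (RCLike.re A.trace) :=
  ⟨fun i => ⟨hA.1.eigenvalues_nonneg i, hA.1.1.eigenvalues_le_one hA.2 i⟩,
    by simp [hA.1.1.trace_eq_sum_eigenvalues]⟩

lemma re_trace_sq_le (hA : A.IsEffect) :
    RCLike.re (A ^ 2).trace ≤ floorAddFractSq (RCLike.re A.trace) := by
  rw [hA.1.1.trace_pow_eq_sum_eigenvalues_pow, map_sum]
  simp_rw [← RCLike.ofReal_pow, RCLike.ofReal_re]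
  exact sum_sq_le_floorAddFractSq hA.eigenvalues_mem_unitCubeSlice

theorem re_trace_mul_mem_Icc (hA : A.IsEffect) (hB : B.IsEffect) {t : ℝ}
    (hAt : RCLike.re A.trace = t) (hBt : RCLike.re B.trace = t) :
    RCLike.re (A * B).trace ∈ Set.Icc (max 0 (2 * t - Fintype.card n)) (floorAddFractSq t) := by
  have hprod := (RCLike.nonneg_iff.mp (hA.1.trace_mul_nonneg hB.1)).1
  have hcompl := (RCLike.nonneg_iff.mp (hA.one_sub.1.trace_mul_nonneg hB.one_sub.1)).1
  rw [show (1 - A) * (1 - B) = 1 - A - B + A * B by noncomm_ring] at hcompl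
  simp only [trace_add, trace_sub, trace_one, map_add, map_sub, RCLike.natCast_re, hAt, hBt]
    at hcompl
  have hsq := hA.1.1.two_mul_re_trace_mul_le hB.1.1
  have hAsq := hAt ▸ hA.re_trace_sq_le
  have hBsq := hBt ▸ hB.re_trace_sq_le
  exact ⟨max_le hprod (by linarith), by linarith⟩

end IsEffect

theorem exists_isEffect_trace_transpose_mul_eq [Nonempty n] (heven : Even (Fintype.card n))
    {t S : ℝ} (ht0 : 0 ≤ t) (htN : t ≤ Fintype.card n) (hS : max 0 (2 * t - Fintype.card n) ≤ S)
    (hl : ∀ l : ℕ, l < Fintype.card n → S ≤ l + (t - l) ^ 2) :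
    ∃ E F : Matrix n n 𝕜, E.IsEffect ∧ F.IsEffect ∧ E.trace = t ∧ F.trace = t ∧
      (Eᵀ * F).trace = S := by
  obtain ⟨x, hx, y, hy, hxy⟩ := exists_mem_unitCubeSlice_sum_mul_eq heven ht0 htN hS hl
  have htrace : ∀ z ∈ unitCubeSlice n t, (diagonal fun i => (z i : 𝕜)).trace = t :=
    fun z hz => by rw [trace_diagonal, ← RCLike.ofReal_sum, hz.2]
  refine ⟨_, _, isEffect_diagonal_ofReal hx.1, isEffect_diagonal_ofReal hy.1, htrace x hx,
    htrace y hy, ?_⟩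
  rw [diagonal_transpose, diagonal_mul_diagonal, trace_diagonal, ← hxy, RCLike.ofReal_sum]
  simp_rw [RCLike.ofReal_mul]

end Matrix

/-- For K ≥ 1 and reals b, c with −1 ≤ c ≤ 1, the following are
equivalent: (i) there exist 2^K × 2^K matrices E, F with 0 ≤ E ≤ I, 0 ≤ F ≤ I,
Tr(E) = Tr(F) = (1+c)·2^{K−1} and Tr(Eᵀ F) = (1+2c+b)·2^{K−2};
(ii) 1+2c+b ≥ 0, 1−2c+b ≥ 0, and for every integer 0 ≤ l ≤ 2^K − 1,
(1+2c+b)·2^{K−2} ≤ l + ((1+c)·2^{K−1} − l)². -/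
theorem epr_correlation_feasibility (K : ℕ) (hK : 1 ≤ K) (b c : ℝ)
    (hc1 : -1 ≤ c) (hc2 : c ≤ 1) :
    (∃ E F : Matrix (Fin (2 ^ K)) (Fin (2 ^ K)) ℂ,
        E.PosSemidef ∧ (1 - E).PosSemidef ∧ F.PosSemidef ∧ (1 - F).PosSemidef ∧
        E.trace = (((1 + c) * 2 ^ ((K : ℤ) - 1) : ℝ) : ℂ) ∧
        F.trace = (((1 + c) * 2 ^ ((K : ℤ) - 1) : ℝ) : ℂ) ∧
        (Eᵀ * F).trace = (((1 + 2 * c + b) * 2 ^ ((K : ℤ) - 2) : ℝ) : ℂ))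
    ↔ (0 ≤ 1 + 2 * c + b ∧ 0 ≤ 1 - 2 * c + b ∧
        ∀ l : ℕ, l ≤ 2 ^ K - 1 →
          (1 + 2 * c + b) * 2 ^ ((K : ℤ) - 2)
            ≤ (l : ℝ) + ((1 + c) * 2 ^ ((K : ℤ) - 1) - (l : ℝ)) ^ 2) := by
  set P : ℝ := 2 ^ ((K : ℤ) - 2)
  have hP : 0 < P := by positivity
  have ht : (2 : ℝ) ^ ((K : ℤ) - 1) = 2 * P := by
    rw [show (K : ℤ) - 1 = (K : ℤ) - 2 + 1 by ring, zpow_add_one₀ two_ne_zero, mul_comm]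
  have hN : (Fintype.card (Fin (2 ^ K)) : ℝ) = 4 * P := by
    rw [Fintype.card_fin, Nat.cast_pow, Nat.cast_ofNat, ← zpow_natCast,
      show ((K : ℕ) : ℤ) = (K : ℤ) - 2 + 2 by ring, zpow_add₀ two_ne_zero]
    norm_num [P, mul_comm]
  rw [ht]
  constructor
  · rintro ⟨E, F, hE, hE1, hF, hF1, hEt, hFt, hEFt⟩
    have hmem := (IsEffect.transpose ⟨hE, hE1⟩).re_trace_mul_mem_Icc ⟨hF, hF1⟩
      (t := (1 + c) * (2 * P)) (by simp [hEt]) (by simp [hFt])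
    rw [hEFt, RCLike.re_to_complex, Complex.ofReal_re, hN] at hmem
    obtain ⟨hlow, hup⟩ := hmem
    refine ⟨?_, ?_, fun l _ => hup.trans (by exact_mod_cast floorAddFractSq_le _ l)⟩
    · nlinarith [le_max_left 0 (2 * ((1 + c) * (2 * P)) - 4 * P)]
    · nlinarith [le_max_right 0 (2 * ((1 + c) * (2 * P)) - 4 * P)]
  · rintro ⟨hpos, hneg, hl⟩
    have heven : Even (Fintype.card (Fin (2 ^ K))) := by
      rw [Fintype.card_fin]
      exact (Nat.even_pow' (by omega)).2 even_two
    obtain ⟨E, F, hE, hF, hEt, hFt, hEFt⟩ := exists_isEffect_trace_transpose_mul_eq (𝕜 := ℂ) heven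
      (mul_nonneg (by linarith) (by positivity)) (by rw [hN]; nlinarith)
      (by rw [hN]; exact max_le (by positivity) (by nlinarith))
      (fun l hlN => hl l (by rw [Fintype.card_fin] at hlN; omega))
    exact ⟨E, F, hE.1, hE.2, hF.1, hF.2, hEt, hFt, hEFt⟩
end

section
/- Let E be an N × N complex matrix with 0 ≤ E ≤ I (E Hermitian positive semidefinite with I − E positive semidefinite) and Tr(E) = t, and let l be an integer with l ≤ t ≤ l + 1. Then ‖E‖_F² = Tr(E²) ≤ l + (t − l)². -/
open Matrix
open scoped ComplexOrder

/-!
The eigenvalues `λᵢ` of `E` lie in `[0, 1]`, sum to `t`, and `Tr(E²) = ∑ λᵢ²`, so it suffices to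
show `∑ xᵢ² ≤ l + (∑ xᵢ - l)²` for reals `xᵢ ∈ [0, 1]` with `l ≤ ∑ xᵢ ≤ l + 1`. Induct on the number
of terms: split off one term `a` and let `T` be the sum of the others. If `T ≥ l`, apply the
hypothesis with the same `l`; the slack is `2a(T - l) ≥ 0`. If `T < l`, apply it with `l - 1`; the
slack is `2(1 - a)(l - T) ≥ 0`.
-/

theorem Finset.sum_sq_le_of_mem_Icc {ι : Type*} (s : Finset ι) (x : ι → ℝ)
    (hx : ∀ i ∈ s, x i ∈ Set.Icc 0 1) (l : ℤ) (hl : l ≤ ∑ i ∈ s, x i)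
    (hl' : ∑ i ∈ s, x i ≤ l + 1) :
    ∑ i ∈ s, x i ^ 2 ≤ l + (∑ i ∈ s, x i - l) ^ 2 := by
  classical
  induction s using Finset.induction_on generalizing l with
  | empty =>
    simp only [Finset.sum_empty] at hl hl' ⊢
    obtain rfl | rfl : l = 0 ∨ l = -1 := by
      have : l ≤ 0 := by exact_mod_cast hl
      have : -1 ≤ l := by exact_mod_cast (by linarith : (-1 : ℝ) ≤ l)
      omega
    all_goals norm_num
  | insert a s ha ih =>
    rw [Finset.sum_insert ha] at hl hl' ⊢
    rw [Finset.sum_insert ha]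
    obtain ⟨ha0, ha1⟩ := hx a (Finset.mem_insert_self a s)
    have hxs : ∀ i ∈ s, x i ∈ Set.Icc 0 1 := fun i hi ↦ hx i (Finset.mem_insert_of_mem hi)
    set T := ∑ i ∈ s, x i
    by_cases hT : l ≤ T
    · have := ih hxs l hT (by linarith)
      nlinarith [mul_nonneg ha0 (sub_nonneg.2 hT)]
    · rw [not_le] at hT
      have := ih hxs (l - 1) (by push_cast; linarith) (by push_cast; linarith)
      push_cast at this
      nlinarith [mul_nonneg (sub_nonneg.2 hT.le) (sub_nonneg.2 ha1)]

theorem Matrix.re_trace_mul_conjTranspose_self {m n 𝕜 : Type*} [Fintype m] [Fintype n] [RCLike 𝕜]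
    (A : Matrix m n 𝕜) : RCLike.re (A * Aᴴ).trace = ∑ i, ∑ j, ‖A i j‖ ^ 2 := by
  simp [trace, mul_apply, RCLike.mul_conj]

theorem Matrix.IsHermitian.trace_mul_self {n 𝕜 : Type*} [Fintype n] [DecidableEq n] [RCLike 𝕜]
    {A : Matrix n n 𝕜} (hA : A.IsHermitian) :
    (A * A).trace = ∑ i, (hA.eigenvalues i : 𝕜) ^ 2 := by
  conv_lhs => rw [hA.spectral_theorem, ← map_mul, Unitary.conjStarAlgAut_apply, trace_mul_cycle,
    Unitary.coe_star_mul_self, one_mul, diagonal_mul_diagonal, trace_diagonal]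
  simp [sq]

theorem Matrix.IsHermitian.eigenvalues_le_one_of_posSemidef_one_sub {n 𝕜 : Type*} [Fintype n]
    [DecidableEq n] [RCLike 𝕜] {A : Matrix n n 𝕜} (hA : A.IsHermitian) (h : (1 - A).PosSemidef)
    (i : n) :
    hA.eigenvalues i ≤ 1 := by
  have hmem : 1 - hA.eigenvalues i ∈ spectrum ℝ (1 - A) := by
    rw [← map_one (algebraMap ℝ (Matrix n n 𝕜)), ← spectrum.singleton_sub_eq]
    exact Set.sub_mem_sub rfl (hA.eigenvalues_mem_spectrum_real i)
  obtain ⟨j, hj⟩ := h.1.spectrum_real_eq_range_eigenvalues ▸ hmem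
  linarith [h.eigenvalues_nonneg j]

/-- If E is an N × N complex matrix with 0 ≤ E ≤ I and Tr(E) = t, and l is
an integer with l ≤ t ≤ l + 1, then ‖E‖_F² = Tr(E²) ≤ l + (t − l)². -/
theorem frobenius_sq_bound_of_trace {N : ℕ} (E : Matrix (Fin N) (Fin N) ℂ)
    (t : ℝ) (l : ℤ)
    (hE : E.PosSemidef) (hIE : ((1 : Matrix (Fin N) (Fin N) ℂ) - E).PosSemidef)
    (ht : E.trace = (t : ℂ)) (hl : (l : ℝ) ≤ t) (hl' : t ≤ (l : ℝ) + 1) :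
    (∑ i, ∑ j, ‖E i j‖ ^ 2) = ((E * E).trace).re ∧
    (∑ i, ∑ j, ‖E i j‖ ^ 2) ≤ (l : ℝ) + (t - (l : ℝ)) ^ 2 := by
  have hH := hE.isHermitian
  have hfro : ∑ i, ∑ j, ‖E i j‖ ^ 2 = ((E * E).trace).re := by
    simpa [hH.eq] using E.re_trace_mul_conjTranspose_self.symm
  have hsq : ((E * E).trace).re = ∑ i, hH.eigenvalues i ^ 2 := by
    simp [hH.trace_mul_self, ← Complex.ofReal_pow]
  have hsum : ∑ i, hH.eigenvalues i = t := by
    simpa using congrArg Complex.re (hH.trace_eq_sum_eigenvalues.symm.trans ht)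
  refine ⟨hfro, ?_⟩
  rw [hfro, hsq, ← hsum]
  exact Finset.univ.sum_sq_le_of_mem_Icc _
    (fun i _ ↦ ⟨hE.eigenvalues_nonneg i, hH.eigenvalues_le_one_of_posSemidef_one_sub hIE i⟩)
    l (hsum ▸ hl) (hsum ▸ hl')
end
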